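/- arXiv:cs/0407003 — 3 statements merged into one kernel-verified Lean document; each statement's English description precedes it below -/
import Mathlib

section
/- For any real ε > 0, the quantity (2+ε)^(2+ε) / (2^(2+ε) · (1+ε)^(1+ε)) is strictly less than 1. -/
/-! Writing `x = 1 + ε`, the claim reads `((1 + x) / 2) ^ (1 + x) < 1 ^ 1 * x ^ x`, which after
taking logarithms is strict midpoint convexity of `t ↦ t log t` at the distinct points `1` and `x`. -/

open Real

theorem Real.mul_log_midpoint_lt {a b : ℝ} (ha : 0 ≤ a) (hb : 0 ≤ b) (hab : a ≠ b) :
    (a + b) / 2 * log ((a + b) / 2) < (a * log a + b * log b) / 2 := by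
  have h := strictConvexOn_mul_log.2 (Set.mem_Ici.2 ha) (Set.mem_Ici.2 hb) hab
    (by norm_num : (0 : ℝ) < 1 / 2) (by norm_num : (0 : ℝ) < 1 / 2) (by norm_num)
  simp only [smul_eq_mul] at h
  rw [show 1 / 2 * a + 1 / 2 * b = (a + b) / 2 by ring] at h
  linarith

theorem Real.midpoint_rpow_add_lt_rpow_self_mul_rpow_self {a b : ℝ} (ha : 0 < a) (hb : 0 < b)
    (hab : a ≠ b) : ((a + b) / 2) ^ (a + b) < a ^ a * b ^ b := by
  have hmid : 0 < (a + b) / 2 := by positivity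
  rw [rpow_def_of_pos hmid, rpow_def_of_pos ha, rpow_def_of_pos hb, ← exp_add, exp_lt_exp]
  linarith [mul_log_midpoint_lt ha.le hb.le hab]

theorem base_lt_one (ε : ℝ) (hε : 0 < ε) :
    (2 + ε) ^ (2 + ε) / (2 ^ (2 + ε) * (1 + ε) ^ (1 + ε)) < 1 := by
  have key := midpoint_rpow_add_lt_rpow_self_mul_rpow_self one_pos (by linarith : 0 < 1 + ε)
    (by linarith : (1 : ℝ) ≠ 1 + ε)
  rw [one_rpow, one_mul, show (1 : ℝ) + (1 + ε) = 2 + ε by ring,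
    div_rpow (by linarith) zero_le_two] at key
  rwa [div_lt_one (by positivity), ← div_lt_iff₀' (by positivity)]
end

section
/- The function f(ε) = (2+ε)^(2+ε) / (2^(2+ε) · (1+ε)^(1+ε)) satisfies f(0) = 1 and is strictly decreasing on [0, ∞). -/
theorem f_zero_eq_one_and_strictAnti
    (f : ℝ → ℝ)
    (hf : ∀ ε : ℝ, f ε = (2 + ε) ^ (2 + ε) / (2 ^ (2 + ε) * (1 + ε) ^ (1 + ε))) :
    f 0 = 1 ∧ StrictAntiOn f (Set.Ici (0 : ℝ)) := by
  set h : ℝ → ℝ := fun ε => (2+ε) * Real.log (2+ε) - (2+ε) * Real.log 2 - (1+ε) * Real.log (1+ε) with hh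
  set g : ℝ → ℝ := fun ε => Real.exp (h ε) with hg
  have key : ∀ ε : ℝ, 0 ≤ ε → f ε = g ε := by
    intro ε hε
    rw [hf, Real.rpow_def_of_pos (by linarith), Real.rpow_def_of_pos (by norm_num : (0:ℝ) < 2),
      Real.rpow_def_of_pos (by linarith), ← Real.exp_add, ← Real.exp_sub]
    simp only [hg, hh]
    ring_nf
  have hderiv : ∀ x : ℝ, 0 ≤ x →
      HasDerivAt g (Real.exp (h x) * (Real.log (2+x) - Real.log 2 - Real.log (1+x))) x := by
    intro x hx
    have h2 : (2:ℝ) + x ≠ 0 := by linarith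
    have h1 : (1:ℝ) + x ≠ 0 := by linarith
    have d2 : HasDerivAt (fun ε : ℝ => 2 + ε) 1 x := (hasDerivAt_id x).const_add 2
    have d1 : HasDerivAt (fun ε : ℝ => 1 + ε) 1 x := (hasDerivAt_id x).const_add 1
    have dh : HasDerivAt h (Real.log (2+x) - Real.log 2 - Real.log (1+x)) x := by
      have := ((d2.mul (d2.log h2)).sub (d2.mul_const (Real.log 2))).sub (d1.mul (d1.log h1))
      convert this using 1
      · rfl
      · rfl
      · rfl
      field_simp
      ring
    simpa using dh.exp
  have hanti : StrictAntiOn g (Set.Ici (0:ℝ)) := by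
    apply StrictAntiOn.mono (s := Set.Ici (0:ℝ))
    · exact StrictAntiOn.mono (strictAntiOn_of_deriv_neg (convex_Ici 0)
        (fun x hx => ((hderiv x hx).continuousAt).continuousWithinAt)
        (fun x hx => by
          rw [interior_Ici] at hx
          have hx' : 0 < x := hx
          rw [(hderiv x (le_of_lt hx)).deriv]
          apply mul_neg_of_pos_of_neg (Real.exp_pos _)
          have : Real.log (2+x) < Real.log 2 + Real.log (1+x) := by
            rw [← Real.log_mul (by norm_num) (by linarith)]
            exact Real.log_lt_log (by linarith) (by nlinarith)
          linarith)) (le_refl _)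
    · exact le_refl _
  constructor
  · rw [key 0 le_rfl]
    simp [hg, hh]
  · intro a ha b hb hab
    rw [key a ha, key b hb]
    exact hanti ha hb hab
end

section
/- Let X be the number of elements of a fixed s-subset landing in the first m positions of a uniform random permutation of 2m elements, where s ≤ m. Then for any 0 ≤ k ≤ s, P(X ≤ k) ≤ (m/(2m - s + 1))^s · Σ_{j=0}^{k} C(s, j). -/
open Finset

theorem tail_bound (m s k : ℕ) (hm : 0 < m) (hs : s ≤ m) (hk : k ≤ s)
    (C : Finset (Fin (2 * m))) (hC : C.card = s) :
    ((Finset.univ.filter (fun π : Equiv.Perm (Fin (2 * m)) =>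
        (C.filter (fun x => (π x : ℕ) < m)).card ≤ k)).card : ℝ) /
      ((Nat.factorial (2 * m) : ℝ)) ≤
    ((m : ℝ) / (2 * m - s + 1)) ^ s * ∑ j ∈ Finset.range (k + 1), (s.choose j : ℝ) := by
  classical
  have hsn : s ≤ 2 * m := by omega
  set T := Finset.univ.filter (fun π : Equiv.Perm (Fin (2 * m)) =>
        (C.filter (fun x => (π x : ℕ) < m)).card ≤ k) with hTdef
  set res : Equiv.Perm (Fin (2 * m)) → ({x // x ∈ C} → Fin (2 * m)) :=
    fun π x => π x.1 with hres
  -- fiber bound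
  have hfiber : ∀ g ∈ T.image res,
      (T.filter fun π => res π = g).card ≤ (2 * m - s).factorial := by
    intro g hg
    rw [Finset.mem_image] at hg
    obtain ⟨π₀, -, hπ₀⟩ := hg
    have hcard : Fintype.card {x : Fin (2 * m) // x ∉ C} = 2 * m - s := by
      simp [Fintype.card_subtype_compl, hC]
    -- each π in the fiber gives σ = π₀⁻¹ * π fixing C pointwise
    have hfix : ∀ π ∈ T.filter fun π => res π = g, ∀ x ∈ C, (π₀⁻¹ * π) x = x := by
      intro π hπ x hx
      rw [Finset.mem_filter] at hπ
      have h1 : π x = g ⟨x, hx⟩ := congrFun hπ.2 ⟨x, hx⟩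
      have h2 : π₀ x = g ⟨x, hx⟩ := congrFun hπ₀ ⟨x, hx⟩
      simp [Equiv.Perm.mul_apply, h1, ← h2]
    have hmemiff : ∀ (σ : Equiv.Perm (Fin (2 * m))), (∀ x ∈ C, σ x = x) →
        ∀ x, x ∉ C ↔ σ x ∉ C := by
      intro σ hσ x
      constructor
      · intro hx hσx
        have hy : σ (σ x) = σ x := hσ _ hσx
        have : σ x = x := σ.injective hy
        rw [this] at hσx; exact hx hσx
      · intro hσx hx
        rw [hσ x hx] at hσx; exact hσx hx
    have := Finset.card_le_card_of_injOn
      (f := fun π => if hπ : π ∈ T.filter fun π => res π = g then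
          ((π₀⁻¹ * π).subtypePerm (p := fun x => x ∉ C) (fun x => (hmemiff _ (hfix π hπ) x).symm))
        else 1)
      (s := T.filter fun π => res π = g)
      (t := (Finset.univ : Finset (Equiv.Perm {x : Fin (2 * m) // x ∉ C})))
      (fun a _ => Finset.mem_univ _) ?_
    · calc (T.filter fun π => res π = g).card
          ≤ (Finset.univ : Finset (Equiv.Perm {x : Fin (2 * m) // x ∉ C})).card := this
        _ = (2 * m - s).factorial := by
            rw [Finset.card_univ, Fintype.card_perm, hcard]
    · intro π₁ h₁ π₂ h₂ heq
      simp only [Finset.coe_filter, Set.mem_setOf_eq] at h₁ h₂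
      have h₁' : π₁ ∈ T.filter fun π => res π = g := Finset.mem_filter.2 h₁
      have h₂' : π₂ ∈ T.filter fun π => res π = g := Finset.mem_filter.2 h₂
      have heq' : ((π₀⁻¹ * π₁).subtypePerm (p := fun x => x ∉ C) (fun x => (hmemiff _ (hfix π₁ h₁') x).symm)) =
          ((π₀⁻¹ * π₂).subtypePerm (p := fun x => x ∉ C) (fun x => (hmemiff _ (hfix π₂ h₂') x).symm)) := by
        simpa only [dif_pos h₁', dif_pos h₂'] using heq
      have hσ : (π₀⁻¹ * π₁ : Equiv.Perm (Fin (2 * m))) = π₀⁻¹ * π₂ := by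
        ext x
        by_cases hx : x ∈ C
        · rw [hfix π₁ h₁' x hx, hfix π₂ h₂' x hx]
        · have h3 := congrArg
            (fun e : Equiv.Perm {x : Fin (2*m) // x ∉ C} => ((e ⟨x, hx⟩ : {x : Fin (2*m) // x ∉ C}) : Fin (2*m))) heq'
          have h4 : π₁ x = π₂ x := by
            simpa [Equiv.Perm.subtypePerm_apply] using h3
          simp [Equiv.Perm.mul_apply, h4]
      exact mul_left_cancel hσ
  have h1 : T.card ≤ (2 * m - s).factorial * (T.image res).card :=
    Finset.card_le_mul_card_image T _ hfiber
  -- image bound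
  set D : Finset (Finset {x // x ∈ C}) :=
    Finset.univ.powerset.filter fun A => A.card ≤ k with hDdef
  have hDcard : D.card = ∑ j ∈ Finset.range (k + 1), s.choose j := by
    have hDeq : D = (Finset.range (k + 1)).biUnion
        (fun j => Finset.powersetCard j (Finset.univ : Finset {x // x ∈ C})) := by
      ext A
      simp only [hDdef, Finset.mem_filter, Finset.mem_powerset, Finset.mem_biUnion,
        Finset.mem_range, Finset.mem_powersetCard, Nat.lt_succ_iff]
      constructor
      · rintro ⟨h1, h2⟩; exact ⟨A.card, h2, h1, rfl⟩
      · rintro ⟨j, hj, hsub, hcard⟩; exact ⟨hsub, hcard ▸ hj⟩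
    rw [hDeq, Finset.card_biUnion]
    · apply Finset.sum_congr rfl
      intro j _
      rw [Finset.card_powersetCard, Finset.card_univ, Fintype.card_coe, hC]
    · intro i _ j _ hij
      apply Finset.disjoint_left.2
      intro A hA hA'
      rw [Finset.mem_powersetCard] at hA hA'
      exact hij (hA.2 ▸ hA'.2 ▸ rfl)
  have henc_inj : Function.Injective
      (fun g : ({x // x ∈ C} → Fin (2 * m)) =>
        ((Finset.univ.filter fun x => (g x : ℕ) < m : Finset {x // x ∈ C}),
         (fun x => if h : (g x : ℕ) < m then (⟨(g x : ℕ), h⟩ : Fin m)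
            else ⟨(g x : ℕ) - m, by have := (g x).isLt; omega⟩))) := by
    intro g₁ g₂ h
    have h1 := congrArg Prod.fst h
    have h2 := congrArg Prod.snd h
    simp only at h1 h2
    funext x
    have hiff : ((g₁ x : ℕ) < m) ↔ ((g₂ x : ℕ) < m) := by
      constructor
      · intro hx
        have : x ∈ Finset.univ.filter fun x => (g₂ x : ℕ) < m := by
          rw [← h1]; exact Finset.mem_filter.2 ⟨Finset.mem_univ _, hx⟩
        exact (Finset.mem_filter.1 this).2
      · intro hx
        have : x ∈ Finset.univ.filter fun x => (g₁ x : ℕ) < m := by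
          rw [h1]; exact Finset.mem_filter.2 ⟨Finset.mem_univ _, hx⟩
        exact (Finset.mem_filter.1 this).2
    have hx2 := congrFun h2 x
    apply Fin.ext
    by_cases hx : (g₁ x : ℕ) < m
    · have hx' : (g₂ x : ℕ) < m := hiff.1 hx
      simp only [dif_pos hx, dif_pos hx'] at hx2
      rw [Fin.mk.injEq] at hx2
      exact hx2
    · have hx' : ¬ (g₂ x : ℕ) < m := fun h' => hx (hiff.2 h')
      simp only [dif_neg hx, dif_neg hx'] at hx2
      rw [Fin.mk.injEq] at hx2
      omega
  have h2 : (T.image res).card ≤ D.card * m ^ s := by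
    have hle := Finset.card_le_card_of_injOn
      (f := fun g : ({x // x ∈ C} → Fin (2 * m)) =>
        ((Finset.univ.filter fun x => (g x : ℕ) < m : Finset {x // x ∈ C}),
         (fun x => if h : (g x : ℕ) < m then (⟨(g x : ℕ), h⟩ : Fin m)
            else ⟨(g x : ℕ) - m, by have := (g x).isLt; omega⟩)))
      (s := T.image res)
      (t := D ×ˢ (Finset.univ : Finset ({x // x ∈ C} → Fin m)))
      ?_ (henc_inj.injOn)
    · calc (T.image res).card ≤ (D ×ˢ (Finset.univ : Finset ({x // x ∈ C} → Fin m))).card := hle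
        _ = D.card * m ^ s := by
            rw [Finset.card_product, Finset.card_univ, Fintype.card_fun,
              Fintype.card_coe, hC, Fintype.card_fin]
    · intro g hg
      rw [Finset.mem_coe, Finset.mem_image] at hg
      obtain ⟨π, hπT, hπg⟩ := hg
      rw [Finset.mem_coe, Finset.mem_product]
      refine ⟨?_, Finset.mem_univ _⟩
      rw [hDdef, Finset.mem_filter]
      refine ⟨Finset.mem_powerset.2 (Finset.subset_univ _), ?_⟩
      have hπk : (C.filter (fun x => (π x : ℕ) < m)).card ≤ k := by
        rw [hTdef] at hπT
        exact (Finset.mem_filter.1 hπT).2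
      have hcardeq : (Finset.univ.filter fun x : {x // x ∈ C} => (g x : ℕ) < m).card
          = (C.filter (fun x => (π x : ℕ) < m)).card := by
        subst hπg
        rw [Finset.univ_eq_attach, Finset.filter_attach (fun x => ((π x : ℕ) < m)) C,
          Finset.card_map, Finset.card_attach]
      rw [hcardeq]
      exact hπk
  -- combine
  have hnat : T.card ≤ (2 * m - s).factorial * (m ^ s * ∑ j ∈ Finset.range (k + 1), s.choose j) := by
    calc T.card ≤ (2 * m - s).factorial * (T.image res).card := h1
      _ ≤ (2 * m - s).factorial * (D.card * m ^ s) :=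
          Nat.mul_le_mul_left _ h2
      _ = (2 * m - s).factorial * (m ^ s * ∑ j ∈ Finset.range (k + 1), s.choose j) := by
          rw [hDcard]; ring
  have hfact : (2 * m - s + 1) ^ s * (2 * m - s).factorial ≤ (2 * m).factorial := by
    have hd := Nat.pow_sub_le_descFactorial (2 * m) s
    have he : 2 * m + 1 - s = 2 * m - s + 1 := by omega
    rw [he] at hd
    calc (2 * m - s + 1) ^ s * (2 * m - s).factorial
        ≤ (2 * m).descFactorial s * (2 * m - s).factorial := Nat.mul_le_mul_right _ hd
      _ = (2 * m).factorial := by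
          rw [mul_comm]; exact Nat.factorial_mul_descFactorial hsn
  -- pass to reals
  have hP : ((2 * m - s + 1 : ℕ) : ℝ) = 2 * (m : ℝ) - s + 1 := by
    push_cast [Nat.cast_sub hsn]
    ring
  rw [← hP]
  have hPpos : (0 : ℝ) < ((2 * m - s + 1 : ℕ) : ℝ) := by positivity
  have hfacpos : (0 : ℝ) < ((2 * m).factorial : ℝ) := by positivity
  have hSum : (0 : ℝ) ≤ ∑ j ∈ Finset.range (k + 1), (s.choose j : ℝ) := by positivity
  rw [div_pow, div_mul_eq_mul_div, div_le_div_iff₀ hfacpos (by positivity)]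
  have hnatR : (T.card : ℝ) ≤ ((2 * m - s).factorial : ℝ) *
      ((m : ℝ) ^ s * ∑ j ∈ Finset.range (k + 1), (s.choose j : ℝ)) := by
    have := hnat
    push_cast
    exact_mod_cast Nat.cast_le.2 hnat
  have hfactR : (((2 * m - s + 1 : ℕ) : ℝ)) ^ s * ((2 * m - s).factorial : ℝ)
      ≤ ((2 * m).factorial : ℝ) := by exact_mod_cast hfact
  have hfacnn : (0 : ℝ) ≤ ((2 * m - s).factorial : ℝ) := by positivity
  calc (T.card : ℝ) * ((2 * m - s + 1 : ℕ) : ℝ) ^ s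
      ≤ (((2 * m - s).factorial : ℝ) *
          ((m : ℝ) ^ s * ∑ j ∈ Finset.range (k + 1), (s.choose j : ℝ)))
        * ((2 * m - s + 1 : ℕ) : ℝ) ^ s := by
        apply mul_le_mul_of_nonneg_right hnatR (by positivity)
    _ = (((2 * m - s + 1 : ℕ) : ℝ) ^ s * ((2 * m - s).factorial : ℝ))
        * ((m : ℝ) ^ s * ∑ j ∈ Finset.range (k + 1), (s.choose j : ℝ)) := by ring
    _ ≤ ((2 * m).factorial : ℝ)
        * ((m : ℝ) ^ s * ∑ j ∈ Finset.range (k + 1), (s.choose j : ℝ)) := by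
        apply mul_le_mul_of_nonneg_right hfactR (by positivity)
    _ = (m : ℝ) ^ s * (∑ j ∈ Finset.range (k + 1), (s.choose j : ℝ)) * ((2 * m).factorial : ℝ) := by
        ring
end
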